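/- arXiv:1809.05026 — 2 statements merged into one kernel-verified Lean document; each statement's English description precedes it below -/
import Mathlib

section
/- Let θ ∈ Der(S) be a polynomial derivation and ζ ∈ D(𝒜, −∞) a logarithmic vector field. Then ∇_θ(ζ) ∈ D(𝒜, −∞). -/
open MvPolynomial

set_option synthInstance.maxHeartbeats 1000000
set_option maxHeartbeats 1000000

noncomputable section

/-- The polynomial ring `S = ℂ[x_1, …, x_ℓ]`. -/
abbrev Spoly (ℓ : ℕ) := MvPolynomial (Fin ℓ) ℂ

/-- The field `F = ℂ(x_1, …, x_ℓ)` of rational functions. -/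
abbrev Frac (ℓ : ℕ) := FractionRing (Spoly ℓ)

/-- The canonical embedding `S → F`. -/
def toF {ℓ : ℕ} : Spoly ℓ →+* Frac ℓ := algebraMap _ _

/-- The linear form with coefficient vector `a`. -/
def lin {ℓ : ℕ} (a : Fin ℓ → ℂ) : Spoly ℓ := ∑ i, C (a i) * X i

/-- Orthogonality of coefficient vectors with respect to the (standard) Hermitian form. -/
def orth {ℓ : ℕ} (a b : Fin ℓ → ℂ) : Prop := ∑ i, (starRingEnd ℂ) (a i) * b i = 0

/-- The localization `S_{⟨α⟩}` of `S` at the prime ideal `⟨α⟩`, as a subset of `F`. -/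
def locAt {ℓ : ℕ} (α : Spoly ℓ) : Set (Frac ℓ) :=
  {x | ∃ f g : Spoly ℓ, g ∉ Ideal.span ({α} : Set (Spoly ℓ)) ∧ toF g * x = toF f}

/-- The ring `S' = S[Q_𝒜^{-1}]`, as a subset of `F`. -/
def Sloc {ℓ : ℕ} (A : Finset (Fin ℓ → ℂ)) : Set (Frac ℓ) :=
  {x | ∃ (f : Spoly ℓ) (n : ℕ), toF (∏ a ∈ A, lin a) ^ n * x = toF f}

/-- The module `D(𝒜, -∞)` of logarithmic vector fields on the arrangement with
defining linear forms `lin a` for `a ∈ A`: derivations of `S' = S[Q_𝒜^{-1}]` with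
`θ(β) ∈ S_{⟨α_H⟩}` for all `β` orthogonal to `α_H`. -/
def Dinf {ℓ : ℕ} (A : Finset (Fin ℓ → ℂ)) (θ : Derivation ℂ (Frac ℓ) (Frac ℓ)) : Prop :=
  (∀ i, θ (toF (X i)) ∈ Sloc A) ∧
  ∀ a ∈ A, ∀ b : Fin ℓ → ℂ, orth a b → θ (toF (lin b)) ∈ locAt (lin a)

/-- The module `D(𝒜, ν)` of `(𝒜,ν)`-derivations for a ℤ-valued multiplicity `ν`:
logarithmic vector fields with `θ(α_H) ∈ α_H^{ν(H)}·S_{⟨α_H⟩}` for every `H ∈ 𝒜`. -/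
def Dmult {ℓ : ℕ} (A : Finset (Fin ℓ → ℂ)) (ν : (Fin ℓ → ℂ) → ℤ)
    (θ : Derivation ℂ (Frac ℓ) (Frac ℓ)) : Prop :=
  Dinf A θ ∧ ∀ a ∈ A, ∃ y ∈ locAt (lin a), θ (toF (lin a)) = toF (lin a) ^ ν a * y

/-- `A` is a central arrangement: all linear forms nonzero and pairwise
non-proportional (distinct hyperplanes). -/
def IsArrangement {ℓ : ℕ} (A : Finset (Fin ℓ → ℂ)) : Prop :=
  (∀ a ∈ A, a ≠ 0) ∧ ∀ a ∈ A, ∀ b ∈ A, (∃ c : ℂ, b = c • a) → a = b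

/-- `θ` is a polynomial derivation, i.e. `θ ∈ Der(S)`. -/
def PolyDer {ℓ : ℕ} (θ : Derivation ℂ (Frac ℓ) (Frac ℓ)) : Prop :=
  ∀ i, ∃ f : Spoly ℓ, θ (toF (X i)) = toF f

/-- `θ_1, …, θ_ℓ` is an `S`-basis of `D(𝒜, ν)`. -/
def IsBasisOfD {ℓ : ℕ} (A : Finset (Fin ℓ → ℂ)) (ν : (Fin ℓ → ℂ) → ℤ)
    (θs : Fin ℓ → Derivation ℂ (Frac ℓ) (Frac ℓ)) : Prop :=
  (∀ i, Dmult A ν (θs i)) ∧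
  ∀ θ, Dmult A ν θ → ∃! c : Fin ℓ → Spoly ℓ, θ = ∑ i, toF (c i) • θs i

/-- `θ` is homogeneous of polynomial degree `d`: `θ = Σ (f_i/g_i) ∂_{x_i}` with
all `f_i` homogeneous of degree `p`, all `g_i ≠ 0` homogeneous of degree `q`, and `d = p - q`. -/
def IsHomogDer {ℓ : ℕ} (θ : Derivation ℂ (Frac ℓ) (Frac ℓ)) (d : ℤ) : Prop :=
  ∃ (p q : ℕ) (f g : Fin ℓ → Spoly ℓ), d = (p : ℤ) - (q : ℤ) ∧
    ∀ i, f i ∈ homogeneousSubmodule (Fin ℓ) ℂ p ∧ g i ∈ homogeneousSubmodule (Fin ℓ) ℂ q ∧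
      g i ≠ 0 ∧ toF (g i) * θ (toF (X i)) = toF (f i)

/-- The defining rational function `Q(𝒜, ν) = ∏_H α_H^{ν(H)}`. -/
def Qrat {ℓ : ℕ} (A : Finset (Fin ℓ → ℂ)) (ν : (Fin ℓ → ℂ) → ℤ) : Frac ℓ :=
  ∏ a ∈ A, toF (lin a) ^ ν a

/-- `ζ` is `ν`-universal for the connection `∇`: `Φ_ζ : θ ↦ ∇_θ(ζ)` is an
`S`-module isomorphism `Der(S) → D(𝒜, ν)`. -/
def IsUniversal {ℓ : ℕ} (A : Finset (Fin ℓ → ℂ)) (ν : (Fin ℓ → ℂ) → ℤ)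
    (nabla : Derivation ℂ (Frac ℓ) (Frac ℓ) → Derivation ℂ (Frac ℓ) (Frac ℓ) →
      Derivation ℂ (Frac ℓ) (Frac ℓ))
    (ζ : Derivation ℂ (Frac ℓ) (Frac ℓ)) : Prop :=
  (∀ θ, PolyDer θ → Dmult A ν (nabla θ ζ)) ∧
  ∀ φ, Dmult A ν φ → ∃! θ, PolyDer θ ∧ nabla θ ζ = φ

/-!
A polynomial derivation maps `S` into `S`, so by the quotient rule
`g² θ(x) = g θ(f) - θ(g) f` it sends a fraction `x = f / g` to a fraction with denominator `g²`.
Both conditions defining `D(𝒜, -∞)` only ask for a denominator of a given kind: a power of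
`Q = ∏ α_H`, resp. an element outside the prime ideal `⟨α_H⟩`, and both kinds are stable under
squaring. Since `∇_θ ζ` agrees with `θ ∘ ζ` on linear forms, it lies in `D(𝒜, -∞)`.
-/

theorem Derivation.sq_mul_eq_of_mul_eq {R A : Type*} [CommSemiring R] [CommRing A] [Algebra R A]
    (D : Derivation R A A) {g x f : A} (h : g * x = f) :
    g ^ 2 * D x = g * D f - D g * f := by
  have hD := congrArg D h
  rw [D.leibniz, smul_eq_mul, smul_eq_mul] at hD
  linear_combination g * hD - D g * h

section

variable {ℓ : ℕ}

theorem prime_lin {a : Fin ℓ → ℂ} (ha : a ≠ 0) : Prime (lin a) := by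
  have h : lin a = sumSMulX (Finsupp.equivFunOnFinite.symm a) := by
    simp [lin, sumSMulX, Finsupp.linearCombination_apply, Finsupp.sum_fintype, smul_eq_C_mul]
  obtain ⟨i, hi⟩ := Function.ne_iff.mp ha
  rw [h]
  refine (irreducible_sumSMulX _ ⟨i, by simpa using hi⟩ fun r hr => ?_).prime
  exact isUnit_iff_ne_zero.2 (ne_zero_of_dvd_ne_zero hi (by simpa using hr i))

theorem toF_C (c : ℂ) : toF (C c : Spoly ℓ) = algebraMap ℂ (Frac ℓ) c :=
  (IsScalarTower.algebraMap_apply ℂ (Spoly ℓ) (Frac ℓ) c).symm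

theorem Derivation.map_toF_lin (D : Derivation ℂ (Frac ℓ) (Frac ℓ)) (b : Fin ℓ → ℂ) :
    D (toF (lin b)) = ∑ j, b j • D (toF (X j)) := by
  have h : toF (lin b) = ∑ j, b j • toF (X j) := by
    simp only [lin, map_sum, map_mul, toF_C, Algebra.smul_def]
  simp only [h, map_sum, map_smul]

namespace PolyDer

variable {θ : Derivation ℂ (Frac ℓ) (Frac ℓ)}

theorem exists_map_toF (hθ : PolyDer θ) (p : Spoly ℓ) : ∃ q, θ (toF p) = toF q := by
  choose f hf using hθ
  refine ⟨mkDerivation ℂ f p, ?_⟩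
  have hext : θ.compAlgebraMap (Spoly ℓ) =
      (Algebra.linearMap (Spoly ℓ) (Frac ℓ)).compDer (mkDerivation ℂ f) :=
    derivation_ext fun i => by simpa [toF, mkDerivation_X] using hf i
  exact congrArg (· p) hext

theorem exists_sq_mul_eq_toF (hθ : PolyDer θ) {g f : Spoly ℓ} {x : Frac ℓ}
    (h : toF g * x = toF f) : ∃ q, toF (g ^ 2) * θ x = toF q := by
  obtain ⟨Dg, hDg⟩ := hθ.exists_map_toF g
  obtain ⟨Df, hDf⟩ := hθ.exists_map_toF f
  refine ⟨g * Df - Dg * f, ?_⟩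
  rw [map_pow, θ.sq_mul_eq_of_mul_eq h, hDg, hDf, map_sub, map_mul, map_mul]

theorem map_mem_Sloc (hθ : PolyDer θ) {A : Finset (Fin ℓ → ℂ)} {x : Frac ℓ} (hx : x ∈ Sloc A) :
    θ x ∈ Sloc A := by
  obtain ⟨f, n, h⟩ := hx
  rw [← map_pow] at h
  obtain ⟨q, hq⟩ := hθ.exists_sq_mul_eq_toF h
  exact ⟨q, n * 2, by rwa [pow_mul, ← map_pow, ← map_pow]⟩

theorem map_mem_locAt (hθ : PolyDer θ) {α : Spoly ℓ} (hα : Prime α) {x : Frac ℓ}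
    (hx : x ∈ locAt α) : θ x ∈ locAt α := by
  obtain ⟨f, g, hg, h⟩ := hx
  obtain ⟨q, hq⟩ := hθ.exists_sq_mul_eq_toF h
  refine ⟨q, g ^ 2, fun hmem => hg ?_, hq⟩
  rw [Ideal.mem_span_singleton] at hmem ⊢
  exact hα.dvd_of_dvd_pow hmem

end PolyDer

end

/-- If `θ ∈ Der(S)` and `ζ ∈ D(𝒜, −∞)`, then `∇_θ(ζ) ∈ D(𝒜, −∞)`. -/
theorem nabla_mem_Dinf {ℓ : ℕ} (A : Finset (Fin ℓ → ℂ)) (hA : IsArrangement A)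
    (nabla : Derivation ℂ (Frac ℓ) (Frac ℓ) → Derivation ℂ (Frac ℓ) (Frac ℓ) →
      Derivation ℂ (Frac ℓ) (Frac ℓ))
    (hnabla : ∀ θ φ (i : Fin ℓ), nabla θ φ (toF (X i)) = θ (φ (toF (X i))))
    (θ ζ : Derivation ℂ (Frac ℓ) (Frac ℓ))
    (hθ : PolyDer θ) (hζ : Dinf A ζ) :
    Dinf A (nabla θ ζ) := by
  have nabla_lin : ∀ b, nabla θ ζ (toF (lin b)) = θ (ζ (toF (lin b))) := fun b => by
    simp only [Derivation.map_toF_lin, map_sum, Derivation.map_smul, hnabla]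
  refine ⟨fun i => ?_, fun a ha b hab => ?_⟩
  · rw [hnabla]
    exact hθ.map_mem_Sloc (hζ.1 i)
  · rw [nabla_lin]
    exact hθ.map_mem_locAt (prime_lin (hA.1 a ha)) (hζ.2 a ha b hab)
end
end

section
/- Let ℋ_k = B_{k+1}^{-1}M_η · B_{k+2}^{-1}M_η ⋯ B_e^{-1}M_η for d ≤ k ≤ e (with ℋ_e = Id), where B_j = −(B_∞ + j·Id) are nonsingular constant diagonal matrices and M_η = t_ℓ·Id + M'(t_1,...,t_{ℓ−1}). If row vectors a_k with entries in T = ℂ[t_1,...,t_{ℓ−1}] satisfy Σ_{k=d}^e a_k ℋ_k = 0, then a_e = 0; consequently the derivations ξ_i^{(k)} = ∇_D^k(η_i), over all k ∈ ℤ and 1 ≤ i ≤ ℓ, are linearly independent over T. -/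
/-
Since `D` kills `T` and the constant matrices `B_j⁻¹` while `D M_η = Id`, every factor `B_j⁻¹ M_η`
of `ℋ_k` is affine along `D` with derivative `B_j⁻¹`. Hence `D^s ℋ_k = 0` for `s > e - k`, and
`D^(e-k) ℋ_k = (e-k)! B_{k+1}⁻¹ ⋯ B_e⁻¹` is invertible. Applying `D^(e-d)` to `Σ a_k ℋ_k = 0`
with `T`-valued `a_k` kills every term except `(e-d)! a_d B_{d+1}⁻¹ ⋯ B_e⁻¹`, so `a_d = 0`, and
induction on `e - d` gives `a_k = 0` for all `k`. The recursion `ξ^(k) = B_{k+1}⁻¹ M_η ξ^(k+1)`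
gives `ξ^(k) = ℋ_k ξ^(e)`, so by the independence of `ξ^(e)` over `K` a `T`-relation among the
`ξ^(k)` is a relation `Σ a_k ℋ_k = 0`.
-/

set_option synthInstance.maxHeartbeats 1000000
set_option maxHeartbeats 1000000

noncomputable section

open Matrix

/-- The nonsingular constant diagonal matrix `B_j = −(B_∞ + j·Id)`. -/
def Bmat {ℓ : ℕ} {K : Type*} [Field K] [Algebra ℂ K] (Binf : Fin ℓ → ℂ) (j : ℤ) :
    Matrix (Fin ℓ) (Fin ℓ) K :=
  -(Matrix.diagonal (fun i => algebraMap ℂ K (Binf i)) + (j : K) • 1)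

/-- The matrix `ℋ_k = B_{k+1}^{-1}M_η · B_{k+2}^{-1}M_η ⋯ B_e^{-1}M_η` (with `ℋ_e = Id`). -/
def Hmat {ℓ : ℕ} {K : Type*} [Field K] [Algebra ℂ K] (Binf : Fin ℓ → ℂ)
    (Mη : Matrix (Fin ℓ) (Fin ℓ) K) (k e : ℤ) : Matrix (Fin ℓ) (Fin ℓ) K :=
  ((List.range (e - k).toNat).map (fun m => (Bmat Binf (k + 1 + m))⁻¹ * Mη)).prod

open Finset

namespace Derivation

variable {A R : Type*} [CommSemiring A] [CommRing R] [Algebra A R] (D : Derivation A R R)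

theorem pow_succ_apply (s : ℕ) (x : R) :
    ((D : Module.End A R) ^ (s + 1)) x = ((D : Module.End A R) ^ s) (D x) := by
  rw [pow_succ, Module.End.mul_apply, coeFn_coe]

theorem pow_apply_mul_of_map_eq_zero {c : R} (hc : D c = 0) (s : ℕ) (x : R) :
    ((D : Module.End A R) ^ s) (c * x) = c * ((D : Module.End A R) ^ s) x := by
  induction s generalizing x with
  | zero => rfl
  | succ s ih =>
    rw [pow_succ_apply, pow_succ_apply, leibniz, hc, smul_zero, add_zero, smul_eq_mul, ih]

theorem pow_succ_apply_mul_of_map_map_eq_zero {c : R} (hc : D (D c) = 0) (s : ℕ) (x : R) :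
    ((D : Module.End A R) ^ (s + 1)) (c * x) =
      c * ((D : Module.End A R) ^ (s + 1)) x + (s + 1) * (D c * ((D : Module.End A R) ^ s) x) := by
  induction s generalizing x with
  | zero =>
    simp only [zero_add, pow_one, pow_zero, Module.End.one_apply, coeFn_coe, leibniz, smul_eq_mul,
      Nat.cast_zero]
    ring
  | succ s ih =>
    rw [pow_succ_apply D (s + 1) (c * x), leibniz, smul_eq_mul, smul_eq_mul, map_add, ih,
      mul_comm x, pow_apply_mul_of_map_eq_zero D hc, ← pow_succ_apply, ← pow_succ_apply]
    push_cast
    ring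

variable {n : Type*} [Fintype n]

theorem map_matrix_mul (M N : Matrix n n R) : (M * N).map D = M.map D * N + M * N.map D := by
  ext i j
  simp only [Matrix.map_apply, Matrix.add_apply, Matrix.mul_apply, map_sum, leibniz, smul_eq_mul,
    ← Finset.sum_add_distrib]
  exact Finset.sum_congr rfl fun _ _ => by ring

theorem map_matrix_inv_eq_zero [DecidableEq n] {M : Matrix n n R} (hM : IsUnit M.det)
    (h : M.map D = 0) : M⁻¹.map D = 0 := by
  have hone : (1 : Matrix n n R).map D = 0 := by
    ext i j
    by_cases hij : i = j <;> simp [hij]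
  have hprod : M * M⁻¹.map D = 0 := by
    simpa [Matrix.mul_nonsing_inv M hM, h, hone] using (D.map_matrix_mul M M⁻¹).symm
  simpa [← Matrix.mul_assoc, Matrix.nonsing_inv_mul M hM] using congrArg (M⁻¹ * ·) hprod

theorem map_pow_succ_matrix_mul_of_map_map_eq_zero {F : Matrix n n R} (hF : (F.map D).map D = 0)
    (s : ℕ) (M : Matrix n n R) :
    (F * M).map ⇑((D : Module.End A R) ^ (s + 1)) =
      F * M.map ⇑((D : Module.End A R) ^ (s + 1)) +
        (s + 1 : R) • (F.map D * M.map ⇑((D : Module.End A R) ^ s)) := by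
  ext i j
  simp only [Matrix.map_apply, Matrix.add_apply, Matrix.smul_apply, Matrix.mul_apply, map_sum,
    pow_succ_apply_mul_of_map_map_eq_zero D (congrFun (congrFun hF _) _), Finset.sum_add_distrib,
    Finset.mul_sum, smul_eq_mul]

theorem list_prod_map_pow_eq_zero [DecidableEq n] {L : List (Matrix n n R)}
    (hL : ∀ F ∈ L, (F.map D).map D = 0) {s : ℕ} (hs : L.length < s) :
    L.prod.map ⇑((D : Module.End A R) ^ s) = 0 := by
  induction L generalizing s with
  | nil =>
    obtain ⟨s, rfl⟩ := Nat.exists_eq_add_of_lt hs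
    ext i j
    by_cases hij : i = j <;> simp [hij, pow_succ_apply]
  | cons F L ih =>
    obtain ⟨s, rfl⟩ : ∃ t, s = t + 1 := Nat.exists_eq_succ_of_ne_zero (by omega)
    have hs' : L.length < s := by simpa using hs
    rw [List.prod_cons, map_pow_succ_matrix_mul_of_map_map_eq_zero D (hL F (by simp)),
      ih (fun F' hF' => hL F' (by simp [hF'])) hs',
      ih (fun F' hF' => hL F' (by simp [hF'])) (by omega)]
    simp

theorem list_prod_map_pow_length [DecidableEq n] {L : List (Matrix n n R)}
    (hL : ∀ F ∈ L, (F.map D).map D = 0) :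
    L.prod.map ⇑((D : Module.End A R) ^ L.length) =
      (L.length.factorial : R) • (L.map (·.map D)).prod := by
  induction L with
  | nil => ext i j; simp
  | cons F L ih =>
    have hL' : ∀ F' ∈ L, (F'.map D).map D = 0 := fun F' hF' => hL F' (by simp [hF'])
    rw [List.prod_cons, List.length_cons,
      map_pow_succ_matrix_mul_of_map_map_eq_zero D (hL F (by simp)),
      list_prod_map_pow_eq_zero D hL' (Nat.lt_succ_self _), ih hL', List.map_cons, List.prod_cons,
      Matrix.mul_zero, zero_add, Matrix.mul_smul, smul_smul, Nat.factorial_succ]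
    push_cast
    ring_nf

theorem pow_apply_vecMul_of_map_eq_zero {a : n → R} (ha : ∀ i, D (a i) = 0) (M : Matrix n n R)
    (s : ℕ) (j : n) :
    ((D : Module.End A R) ^ s) (Matrix.vecMul a M j) =
      Matrix.vecMul a (M.map ⇑((D : Module.End A R) ^ s)) j := by
  simp only [Matrix.vecMul, dotProduct, map_sum, pow_apply_mul_of_map_eq_zero D (ha _),
    Matrix.map_apply]

theorem eq_zero_of_sum_vecMul_eq_zero_of_le [DecidableEq n] {H : ℤ → Matrix n n R} {e : ℤ}
    (hvanish : ∀ k s, (e - k).toNat < s → (H k).map ⇑((D : Module.End A R) ^ s) = 0)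
    (hunit : ∀ k, IsUnit ((H k).map ⇑((D : Module.End A R) ^ (e - k).toNat)))
    {a : ℤ → n → R} (ha : ∀ k i, D (a k i) = 0) {d : ℤ} (hde : d ≤ e)
    (hsum : ∑ k ∈ Icc d e, Matrix.vecMul (a k) (H k) = 0) : a d = 0 := by
  set N := (e - d).toNat
  have hlower : ∀ k ∈ Icc (d + 1) e,
      Matrix.vecMul (a k) ((H k).map ⇑((D : Module.End A R) ^ N)) = 0 :=
    fun k hk => by rw [hvanish k N (by simp at hk; omega), Matrix.vecMul_zero]
  have hlead : Matrix.vecMul (a d) ((H d).map ⇑((D : Module.End A R) ^ N)) = 0 := by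
    ext j
    have := congrArg (fun v => ((D : Module.End A R) ^ N) (v j)) hsum
    simp only [Finset.sum_apply, map_sum, pow_apply_vecMul_of_map_eq_zero D (ha _),
      Pi.zero_apply, map_zero] at this
    rwa [← insert_Icc_add_one_left_eq_Icc hde, sum_insert (by simp), ← Finset.sum_apply,
      sum_eq_zero hlower, Pi.zero_apply, add_zero] at this
  exact Matrix.vecMul_injective_of_isUnit (hunit d) (by simpa using hlead)

theorem eq_zero_of_sum_vecMul_eq_zero [DecidableEq n] {H : ℤ → Matrix n n R} {e : ℤ}
    (hvanish : ∀ k s, (e - k).toNat < s → (H k).map ⇑((D : Module.End A R) ^ s) = 0)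
    (hunit : ∀ k, IsUnit ((H k).map ⇑((D : Module.End A R) ^ (e - k).toNat)))
    {a : ℤ → n → R} (ha : ∀ k i, D (a k i) = 0) {d : ℤ}
    (hsum : ∑ k ∈ Icc d e, Matrix.vecMul (a k) (H k) = 0) : ∀ k ∈ Icc d e, a k = 0 := by
  induction hN : (e + 1 - d).toNat generalizing d with
  | zero => intro k hk; simp at hk; omega
  | succ N ih =>
    have hde : d ≤ e := by omega
    have hd := eq_zero_of_sum_vecMul_eq_zero_of_le D hvanish hunit ha hde hsum
    rw [← insert_Icc_add_one_left_eq_Icc hde, sum_insert (by simp), hd, Matrix.zero_vecMul,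
      zero_add] at hsum
    intro k hk
    rcases eq_or_lt_of_le (mem_Icc.mp hk).1 with rfl | hdk
    · exact hd
    · exact ih hsum (by omega) k (mem_Icc.mpr ⟨hdk, (mem_Icc.mp hk).2⟩)

end Derivation

section Hmat

variable {ℓ : ℕ} {K : Type*} [Field K] [Algebra ℂ K]

theorem Hmat_eq_list_prod (Binf : Fin ℓ → ℂ) (Mη : Matrix (Fin ℓ) (Fin ℓ) K) (k e : ℤ) :
    Hmat Binf Mη k e =
      ((List.range (e - k).toNat).map fun m : ℕ => (Bmat Binf (k + 1 + m))⁻¹ * Mη).prod := by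
  simp [Hmat, ← List.map_eq_flatMap, List.map_map, Function.comp_def]

theorem Hmat_self (Binf : Fin ℓ → ℂ) (Mη : Matrix (Fin ℓ) (Fin ℓ) K) (k : ℤ) :
    Hmat Binf Mη k k = 1 := by
  simp [Hmat_eq_list_prod]

theorem Hmat_eq_mul (Binf : Fin ℓ → ℂ) (Mη : Matrix (Fin ℓ) (Fin ℓ) K) {k e : ℤ} (hke : k < e) :
    Hmat Binf Mη k e = ((Bmat Binf (k + 1))⁻¹ * Mη) * Hmat Binf Mη (k + 1) e := by
  rw [Hmat_eq_list_prod, Hmat_eq_list_prod, show (e - k).toNat = (e - (k + 1)).toNat + 1 by omega,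
    List.range_succ_eq_map, List.map_cons, List.prod_cons, List.map_map]
  congr 3
  · simp
  · ext m : 1
    simp only [Function.comp_apply, Nat.cast_succ]
    ring_nf

theorem Bmat_map_derivation (D : Derivation ℂ K K) (Binf : Fin ℓ → ℂ) (j : ℤ) :
    (Bmat Binf j : Matrix (Fin ℓ) (Fin ℓ) K).map D = 0 := by
  ext i i'
  by_cases h : i = i' <;> simp [Bmat, h]

variable (D : Derivation ℂ K K) {Binf : Fin ℓ → ℂ} {Mη : Matrix (Fin ℓ) (Fin ℓ) K}

theorem Bmat_inv_mul_map_derivation (hMη : Mη.map D = 1) {j : ℤ}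
    (hB : (Bmat Binf j : Matrix (Fin ℓ) (Fin ℓ) K).det ≠ 0) :
    ((Bmat Binf j)⁻¹ * Mη).map D = (Bmat Binf j)⁻¹ := by
  rw [D.map_matrix_mul, D.map_matrix_inv_eq_zero (isUnit_iff_ne_zero.mpr hB)
    (Bmat_map_derivation D Binf j), hMη, Matrix.zero_mul, zero_add, Matrix.mul_one]

theorem map_derivation_map_derivation_of_mem_Hmat_factors (hMη : Mη.map D = 1)
    (hBdet : ∀ j : ℤ, (Bmat Binf j : Matrix (Fin ℓ) (Fin ℓ) K).det ≠ 0) {k : ℤ} {n : ℕ} :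
    ∀ F ∈ (List.range n).map fun m : ℕ => (Bmat Binf (k + 1 + m))⁻¹ * Mη, (F.map D).map D = 0 := by
  simp only [List.mem_map]
  rintro _ ⟨m, -, rfl⟩
  rw [Bmat_inv_mul_map_derivation D hMη (hBdet _),
    D.map_matrix_inv_eq_zero (isUnit_iff_ne_zero.mpr (hBdet _)) (Bmat_map_derivation D Binf _)]

theorem Hmat_map_pow_eq_zero (hMη : Mη.map D = 1)
    (hBdet : ∀ j : ℤ, (Bmat Binf j : Matrix (Fin ℓ) (Fin ℓ) K).det ≠ 0) {k e : ℤ} {s : ℕ}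
    (hs : (e - k).toNat < s) : (Hmat Binf Mη k e).map ⇑((D : Module.End ℂ K) ^ s) = 0 := by
  rw [Hmat_eq_list_prod]
  exact D.list_prod_map_pow_eq_zero (map_derivation_map_derivation_of_mem_Hmat_factors D hMη hBdet)
    (by simpa using hs)

theorem isUnit_Hmat_map_pow (hMη : Mη.map D = 1)
    (hBdet : ∀ j : ℤ, (Bmat Binf j : Matrix (Fin ℓ) (Fin ℓ) K).det ≠ 0) (k e : ℤ) :
    IsUnit ((Hmat Binf Mη k e).map ⇑((D : Module.End ℂ K) ^ (e - k).toNat)) := by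
  have : CharZero K := charZero_of_injective_algebraMap (algebraMap ℂ K).injective
  have hfac : IsUnit ((e - k).toNat.factorial : K) :=
    isUnit_iff_ne_zero.mpr (Nat.cast_ne_zero.mpr (Nat.factorial_ne_zero _))
  have htop := D.list_prod_map_pow_length
    (map_derivation_map_derivation_of_mem_Hmat_factors D hMη hBdet (k := k) (n := (e - k).toNat))
  rw [List.length_map, List.length_range] at htop
  rw [Hmat_eq_list_prod, htop, Matrix.smul_eq_diagonal_mul]
  refine (hfac.map (Matrix.scalar (Fin ℓ))).mul (List.prod_isUnit ?_)
  simp only [List.map_map, List.mem_map]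
  rintro _ ⟨m, -, rfl⟩
  rw [Function.comp_apply, Bmat_inv_mul_map_derivation D hMη (hBdet _),
    Matrix.isUnit_nonsing_inv_iff, Matrix.isUnit_iff_isUnit_det]
  exact isUnit_iff_ne_zero.mpr (hBdet _)

end Hmat

theorem Matrix.sum_smul_sum_smul_eq_sum_vecMul_smul {ι ι' K M : Type*} [Fintype ι] [Fintype ι']
    [CommSemiring K] [AddCommMonoid M] [Module K M] (c : ι → K) (F : Matrix ι ι' K) (v : ι' → M) :
    ∑ i, c i • ∑ j, F i j • v j = ∑ j, Matrix.vecMul c F j • v j := by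
  simp only [Finset.smul_sum, smul_smul, Matrix.vecMul, dotProduct, Finset.sum_smul]
  exact Finset.sum_comm

theorem sum_smul_eq_sum_vecMul_Hmat_smul {ℓ : ℕ} {K M : Type*} [Field K] [Algebra ℂ K]
    [AddCommGroup M] [Module K M] {Binf : Fin ℓ → ℂ} {Mη : Matrix (Fin ℓ) (Fin ℓ) K}
    {xi : ℤ → Fin ℓ → M}
    (hrec : ∀ (k : ℤ) (i : Fin ℓ), xi k i =
      ∑ j, (((Bmat Binf (k + 1) : Matrix (Fin ℓ) (Fin ℓ) K))⁻¹ * Mη) i j • xi (k + 1) j)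
    {k e : ℤ} (hke : k ≤ e) (c : Fin ℓ → K) :
    ∑ i, c i • xi k i = ∑ j, Matrix.vecMul c (Hmat Binf Mη k e) j • xi e j := by
  induction k, hke using Int.leInductionDown generalizing c with
  | base => simp [Hmat_self]
  | pred k hke ih =>
    have hlt : k - 1 < e := by omega
    simp only [hrec (k - 1), sub_add_cancel]
    rw [Matrix.sum_smul_sum_smul_eq_sum_vecMul_smul, ih, Hmat_eq_mul Binf Mη hlt, sub_add_cancel,
      Matrix.vecMul_vecMul]

theorem Hmat_relation_and_T_independence_general {ℓ : ℕ} {K : Type*} [Field K] [Algebra ℂ K]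
    (Dder : Derivation ℂ K K) (nabD : Derivation ℂ K K → Derivation ℂ K K)
    (Tsub : Subalgebra ℂ K) (hT : ∀ x ∈ Tsub, Dder x = 0)
    (tl : K) (hDtl : Dder tl = 1)
    (Mη : Matrix (Fin ℓ) (Fin ℓ) K)
    (hM' : ∀ i j, Mη i j - (if i = j then tl else 0) ∈ Tsub)
    (Binf : Fin ℓ → ℂ) (hBdet : ∀ j : ℤ, (Bmat Binf j : Matrix (Fin ℓ) (Fin ℓ) K).det ≠ 0) :
    (∀ d e : ℤ, d ≤ e → ∀ a : ℤ → Fin ℓ → K, (∀ k i, a k i ∈ Tsub) →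
      (∑ k ∈ Finset.Icc d e, Matrix.vecMul (a k) (Hmat Binf Mη k e)) = 0 →
      a e = 0) ∧
    (∀ xi : ℤ → Fin ℓ → Derivation ℂ K K,
      (∀ (k : ℤ) (i : Fin ℓ), nabD (xi k i) = xi (k + 1) i) →
      (∀ (k : ℤ) (i : Fin ℓ), xi k i =
        ∑ j, ((((Bmat Binf (k + 1) : Matrix (Fin ℓ) (Fin ℓ) K))⁻¹ * Mη) i j) • xi (k + 1) j) →
      (∀ (k : ℤ) (c : Fin ℓ → K), ∑ i, c i • xi k i = 0 → c = 0) →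
      ∀ d e : ℤ, d ≤ e → ∀ a : ℤ → Fin ℓ → K, (∀ k i, a k i ∈ Tsub) →
        (∑ k ∈ Finset.Icc d e, ∑ i, a k i • xi k i) = 0 →
        ∀ k ∈ Finset.Icc d e, ∀ i, a k i = 0) := by
  have hMη : Mη.map Dder = 1 := by
    ext i j
    rw [Matrix.map_apply, ← sub_add_cancel (Mη i j) (if i = j then tl else 0), map_add,
      hT _ (hM' i j), zero_add, Matrix.one_apply]
    split_ifs <;> simp [hDtl]
  have hrel : ∀ (d e : ℤ) (a : ℤ → Fin ℓ → K), (∀ k i, a k i ∈ Tsub) →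
      ∑ k ∈ Icc d e, vecMul (a k) (Hmat Binf Mη k e) = 0 → ∀ k ∈ Icc d e, a k = 0 :=
    fun d e a ha hsum => Dder.eq_zero_of_sum_vecMul_eq_zero
      (fun _ _ hs => Hmat_map_pow_eq_zero Dder hMη hBdet hs)
      (isUnit_Hmat_map_pow Dder hMη hBdet · e) (fun k i => hT _ (ha k i)) hsum
  refine ⟨fun d e hde a ha hsum => hrel d e a ha hsum e (right_mem_Icc.mpr hde), ?_⟩
  intro xi _ hrec hindep d e _ a ha hsum k hk i
  have hcoef : ∑ k ∈ Icc d e, vecMul (a k) (Hmat Binf Mη k e) = 0 := by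
    refine hindep e _ (hsum ▸ ?_)
    rw [sum_congr rfl fun k hk => sum_smul_eq_sum_vecMul_Hmat_smul hrec (mem_Icc.mp hk).2 (a k),
      sum_comm]
    simp only [Finset.sum_apply, Finset.sum_smul]
  exact congrFun (hrel d e a ha hcoef k hk) i

/-- With `M_η = t_ℓ·Id + M'(t')`, `D = ∂_{t_ℓ}` (so `D(M_η) = Id` and `D` kills `T`):
(1) if row vectors `a_k` with entries in `T` satisfy `Σ_{k=d}^e a_k ℋ_k = 0`, then `a_e = 0`;
(2) consequently the derivations `ξ_i^{(k)} = ∇_D^k(η_i)` are linearly independent over `T`. -/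
theorem Hmat_relation_and_T_independence {ℓ : ℕ} {K : Type*} [Field K] [Algebra ℂ K]
    (Dder : Derivation ℂ K K) (nabD : Derivation ℂ K K → Derivation ℂ K K)
    (hadd : ∀ φ ψ, nabD (φ + ψ) = nabD φ + nabD ψ)
    (hLeib : ∀ (p : K) φ, nabD (p • φ) = Dder p • φ + p • nabD φ)
    (Tsub : Subalgebra ℂ K) (hT : ∀ x ∈ Tsub, Dder x = 0)
    (tl : K) (hDtl : Dder tl = 1)
    (Mη : Matrix (Fin ℓ) (Fin ℓ) K) (hdet : Mη.det ≠ 0)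
    (hM' : ∀ i j, Mη i j - (if i = j then tl else 0) ∈ Tsub)
    (Binf : Fin ℓ → ℂ) (hBdet : ∀ j : ℤ, (Bmat Binf j : Matrix (Fin ℓ) (Fin ℓ) K).det ≠ 0) :
    (∀ d e : ℤ, d ≤ e → ∀ a : ℤ → Fin ℓ → K, (∀ k i, a k i ∈ Tsub) →
      (∑ k ∈ Finset.Icc d e, Matrix.vecMul (a k) (Hmat Binf Mη k e)) = 0 →
      a e = 0) ∧
    (∀ xi : ℤ → Fin ℓ → Derivation ℂ K K,
      (∀ (k : ℤ) (i : Fin ℓ), nabD (xi k i) = xi (k + 1) i) →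
      (∀ (k : ℤ) (i : Fin ℓ), xi k i =
        ∑ j, ((((Bmat Binf (k + 1) : Matrix (Fin ℓ) (Fin ℓ) K))⁻¹ * Mη) i j) • xi (k + 1) j) →
      (∀ (k : ℤ) (c : Fin ℓ → K), ∑ i, c i • xi k i = 0 → c = 0) →
      ∀ d e : ℤ, d ≤ e → ∀ a : ℤ → Fin ℓ → K, (∀ k i, a k i ∈ Tsub) →
        (∑ k ∈ Finset.Icc d e, ∑ i, a k i • xi k i) = 0 →
        ∀ k ∈ Finset.Icc d e, ∀ i, a k i = 0) :=
  Hmat_relation_and_T_independence_general Dder nabD Tsub hT tl hDtl Mη hM' Binf hBdet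
end
end
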